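/- Let X and Y be locally compact, connected Hausdorff spaces, ρ a quasi-integral on C_c(X) and η a quasi-integral on C_c(Y). If the topological measure μ_ρ corresponding to ρ assumes more than two values and the functional η × ρ on C_c(X × Y) is a quasi-integral, then η is linear, i.e., η(g + h) = η(g) + η(h) for all g, h ∈ C_c(Y). -/

import Mathlib

open scoped ENNReal CompactlySupported
open CompactlySupportedContinuousMap

namespace QLF

variable {X Y : Type*}

/-- Membership in the singly generated subalgebra `B(f)`:
`g ∈ B(f)` iff `g = φ ∘ f` for some continuous `φ` with `φ 0 = 0`. -/
def InB [TopologicalSpace X] (f g : C_c(X, ℝ)) : Prop :=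
  ∃ φ : C(ℝ, ℝ), φ 0 = 0 ∧ ∀ x, g x = φ (f x)

/-- A quasi-integral (quasi-linear functional) on `C_c(X)`. -/
structure IsQuasiIntegral [TopologicalSpace X] (ρ : C_c(X, ℝ) → ℝ) : Prop where
  smul : ∀ (a : ℝ) (f : C_c(X, ℝ)), ρ (a • f) = a * ρ f
  add : ∀ f g h : C_c(X, ℝ), InB f g → InB f h → ρ (g + h) = ρ g + ρ h
  pos : ∀ f : C_c(X, ℝ), (∀ x, 0 ≤ f x) → 0 ≤ ρ f

/-- The value of the topological measure corresponding to `ρ` on an open set. -/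
noncomputable def qiOpen [TopologicalSpace X] (ρ : C_c(X, ℝ) → ℝ) (U : Set X) : ℝ≥0∞ :=
  ⨆ (f : C_c(X, ℝ)) (_ : (∀ x, 0 ≤ f x ∧ f x ≤ 1) ∧ tsupport f ⊆ U), ENNReal.ofReal (ρ f)

open Classical in
/-- The topological measure corresponding to a quasi-integral `ρ`:
on open sets given by `qiOpen`, on other (closed) sets by outer regularity. -/
noncomputable def qiMeas [TopologicalSpace X] (ρ : C_c(X, ℝ) → ℝ) (A : Set X) : ℝ≥0∞ :=
  if IsOpen A then qiOpen ρ A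
  else ⨅ (U : Set X) (_ : IsOpen U ∧ A ⊆ U), qiOpen ρ U

/-- A topological measure on `X` (as a set function on all sets; only its values on
open and closed sets are constrained/meaningful). -/
def IsTopMeasure [TopologicalSpace X] (μ : Set X → ℝ≥0∞) : Prop :=
  (∀ A B : Set X, Disjoint A B → (IsCompact A ∨ IsOpen A) → (IsCompact B ∨ IsOpen B) →
      (IsCompact (A ∪ B) ∨ IsOpen (A ∪ B)) → μ (A ∪ B) = μ A + μ B) ∧
  (∀ U : Set X, IsOpen U → μ U = ⨆ (K : Set X) (_ : IsCompact K ∧ K ⊆ U), μ K) ∧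
  (∀ F : Set X, IsClosed F → μ F = ⨅ (U : Set X) (_ : IsOpen U ∧ F ⊆ U), μ U)

/-- A simple topological measure: assumes only the values 0 and 1 on open and closed sets. -/
def IsSimpleTM [TopologicalSpace X] (μ : Set X → ℝ≥0∞) : Prop :=
  IsTopMeasure μ ∧ ∀ A : Set X, IsOpen A ∨ IsClosed A → μ A = 0 ∨ μ A = 1

/-- A simple quasi-integral: its corresponding topological measure assumes only 0 and 1. -/
def IsSimpleQI [TopologicalSpace X] (ρ : C_c(X, ℝ) → ℝ) : Prop :=
  ∀ A : Set X, IsOpen A ∨ IsClosed A → qiMeas ρ A = 0 ∨ qiMeas ρ A = 1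

/-- An almost simple quasi-integral: its corresponding topological measure is a positive
scalar multiple of a simple topological measure. -/
def IsAlmostSimpleQI [TopologicalSpace X] (ρ : C_c(X, ℝ) → ℝ) : Prop :=
  ∃ (c : ℝ≥0∞) (μ' : Set X → ℝ≥0∞), 0 < c ∧ c ≠ ∞ ∧ IsSimpleTM μ' ∧
    ∀ A : Set X, IsOpen A ∨ IsClosed A → qiMeas ρ A = c * μ' A

/-- The composition `φ ∘ f` as an element of `C_c(X, ℝ)`, for continuous `φ` with `φ 0 = 0`. -/
noncomputable def compCc [TopologicalSpace X] (φ : C(ℝ, ℝ)) (hφ : φ 0 = 0)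
    (f : C_c(X, ℝ)) : C_c(X, ℝ) :=
  ⟨⟨fun x => φ (f x), φ.continuous.comp f.continuous⟩, f.hasCompactSupport'.comp_left hφ⟩

section Products

variable [TopologicalSpace X] [TopologicalSpace Y]

/-- The section `f_y ∈ C_c(X)` of `f ∈ C_c(X × Y)`, `f_y (x) = f (x, y)`. -/
noncomputable def fiberY [T2Space X] (f : C_c(X × Y, ℝ)) (y : Y) : C_c(X, ℝ) :=
  ⟨⟨fun x => f (x, y), f.continuous.comp (continuous_id.prodMk continuous_const)⟩,
    HasCompactSupport.intro (f.hasCompactSupport'.image continuous_fst)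
      (fun x hx => by
        by_contra h
        exact hx ⟨(x, y), subset_tsupport _ h, rfl⟩)⟩

/-- The section `f_x ∈ C_c(Y)` of `f ∈ C_c(X × Y)`, `f_x (y) = f (x, y)`. -/
noncomputable def fiberX [T2Space Y] (f : C_c(X × Y, ℝ)) (x : X) : C_c(Y, ℝ) :=
  ⟨⟨fun y => f (x, y), f.continuous.comp (continuous_const.prodMk continuous_id)⟩,
    HasCompactSupport.intro (f.hasCompactSupport'.image continuous_snd)
      (fun y hy => by
        by_contra h
        exact hy ⟨(x, y), subset_tsupport _ h, rfl⟩)⟩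

/-- `T_ρ(f) (y) = ρ (f_y)` as a bare function on `Y`. -/
noncomputable def Tmap [T2Space X] (ρ : C_c(X, ℝ) → ℝ) (f : C_c(X × Y, ℝ)) : Y → ℝ :=
  fun y => ρ (fiberY f y)

/-- `S_η(f) (x) = η (f_x)` as a bare function on `X`. -/
noncomputable def Smap [T2Space Y] (η : C_c(Y, ℝ) → ℝ) (f : C_c(X × Y, ℝ)) : X → ℝ :=
  fun x => η (fiberX f x)

open Classical in
/-- `T_ρ(f)` as an element of `C_c(Y, ℝ)` (when `ρ` is a quasi-integral, `T_ρ(f)` is indeed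
continuous with compact support, and this definition takes the first branch). -/
noncomputable def TCc [T2Space X] (ρ : C_c(X, ℝ) → ℝ) (f : C_c(X × Y, ℝ)) : C_c(Y, ℝ) :=
  if h : Continuous (Tmap ρ f) ∧ HasCompactSupport (Tmap ρ f)
  then ⟨⟨Tmap ρ f, h.1⟩, h.2⟩ else 0

open Classical in
/-- `S_η(f)` as an element of `C_c(X, ℝ)`. -/
noncomputable def SCc [T2Space Y] (η : C_c(Y, ℝ) → ℝ) (f : C_c(X × Y, ℝ)) : C_c(X, ℝ) :=
  if h : Continuous (Smap η f) ∧ HasCompactSupport (Smap η f)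
  then ⟨⟨Smap η f, h.1⟩, h.2⟩ else 0

/-- The repeated quasi-integral `(η × ρ) (f) = η (T_ρ (f))`. -/
noncomputable def prodQI [T2Space X] (η : C_c(Y, ℝ) → ℝ) (ρ : C_c(X, ℝ) → ℝ) :
    C_c(X × Y, ℝ) → ℝ := fun f => η (TCc ρ f)

/-- The repeated quasi-integral `(ρ × η) (f) = ρ (S_η (f))`. -/
noncomputable def prodQI' [T2Space Y] (ρ : C_c(X, ℝ) → ℝ) (η : C_c(Y, ℝ) → ℝ) :
    C_c(X × Y, ℝ) → ℝ := fun f => ρ (SCc η f)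

/-- The tensor product `(g ⊗ h) (x, y) = g (x) * h (y)` as an element of `C_c(X × Y, ℝ)`. -/
noncomputable def tensor (g : C_c(X, ℝ)) (h : C_c(Y, ℝ)) : C_c(X × Y, ℝ) :=
  ⟨⟨fun p => g p.1 * h p.2,
      (g.continuous.comp continuous_fst).mul (h.continuous.comp continuous_snd)⟩,
    HasCompactSupport.intro' (g.hasCompactSupport'.prod h.hasCompactSupport')
      ((isClosed_tsupport _).prod (isClosed_tsupport _))
      (fun p hp => by
        rcases not_and_or.mp (by simpa [Set.mem_prod] using hp) with h1 | h1
        · simp [image_eq_zero_of_notMem_tsupport h1]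
        · simp [image_eq_zero_of_notMem_tsupport h1])⟩

end Products

/-- A topological measure is subadditive (equivalently, extends to a Borel measure). -/
def IsSubadditiveOnOpens [TopologicalSpace X] (μ : Set X → ℝ≥0∞) : Prop :=
  ∀ U V : Set X, IsOpen U → IsOpen V → μ (U ∪ V) ≤ μ U + μ V

/-- `μ` is a positive scalar multiple of a point mass `δ_{x₀}` (on open and closed sets). -/
def IsPointMassMultiple [TopologicalSpace X] (μ : Set X → ℝ≥0∞) : Prop :=
  ∃ (c : ℝ≥0∞) (x₀ : X), 0 < c ∧ c ≠ ∞ ∧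
    ∀ A : Set X, IsOpen A ∨ IsClosed A →
      μ A = c * A.indicator (fun _ => (1 : ℝ≥0∞)) x₀

end QLF


/-!
Call `ρ` split if some `B(f)` contains `g, h ≥ 0` with `g * h = 0`, `ρ g > 0` and `ρ h > 0`.

If `ρ` splits, the positive and negative parts of `w₁ ⊗ g - w₂ ⊗ h` (for `g, h ≥ 0`) lie in one
singly generated algebra and have sections `g(y) w₁`, `h(y) w₂`, so quasi-linearity of `η × ρ`
gives `η (ρ(w₁) g + ρ(w₂) h) = ρ(w₁) η g + ρ(w₂) η h`. Rescaling makes `η` additive on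
nonnegative functions, hence everywhere.

If `ρ` does not split, every `0 ≤ k ≤ 1` with `ρ k > 0` is dominated by a pure `w ∈ B(k)`: one
for which `ρ` on `B(w)` only sees the level set `{w = 1}`. Take `w = min (k / δ) 1`, where
`δ > 0` is such that `ρ` charges `{k > δ}` (it must, as `ρ (min k δ) ≤ √δ ρ (√k)`). Two pure
functions of positive mass have equal mass, both being equal to that of a Urysohn function
`W ≡ 1` on their supports, as seen through the pure function `(W + w) / 2`. So `μ_ρ` takes only
the values `0` and `μ_ρ(X)` on open sets, and by outer regularity on all sets: it cannot take
three values.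
-/

namespace QLF

variable {X Y : Type*}

noncomputable def ramp (a b : ℝ) : C(ℝ, ℝ) :=
  ⟨fun t => max 0 (min 1 ((t - a) / (b - a))), by fun_prop⟩

section Ramp

variable {a b t : ℝ}

lemma ramp_apply : ramp a b t = max 0 (min 1 ((t - a) / (b - a))) := rfl

lemma ramp_nonneg : 0 ≤ ramp a b t := le_max_left _ _

lemma ramp_le_one : ramp a b t ≤ 1 := max_le zero_le_one (min_le_left _ _)

lemma ramp_of_le (hab : a < b) (ht : t ≤ a) : ramp a b t = 0 :=
  max_eq_left (min_le_of_right_le (div_nonpos_of_nonpos_of_nonneg (by linarith) (by linarith)))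

lemma ramp_of_ge (hab : a < b) (ht : b ≤ t) : ramp a b t = 1 := by
  rw [ramp_apply, min_eq_left ((one_le_div (by linarith)).2 (by linarith)),
    max_eq_right zero_le_one]

lemma ramp_of_mem (hab : a < b) (ha : a ≤ t) (hb : t ≤ b) :
    ramp a b t = (t - a) / (b - a) := by
  rw [ramp_apply, min_eq_right ((div_le_one (by linarith)).2 (by linarith)),
    max_eq_right (div_nonneg (by linarith) (by linarith))]

lemma ramp_zero (ha : 0 ≤ a) (hab : a < b) : ramp a b 0 = 0 := ramp_of_le hab ha

lemma lt_of_ramp_ne_zero (hab : a < b) (h : ramp a b t ≠ 0) : a < t :=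
  lt_of_not_ge fun ht => h (ramp_of_le hab ht)

end Ramp

lemma max_sub_le_ramp {δ t : ℝ} (hδ : 0 < δ) (ht : t ≤ 1) :
    max (t - 2 * δ) 0 ≤ ramp δ (2 * δ) t := by
  rcases le_total t (2 * δ) with h | h
  · rw [max_eq_right (by linarith)]
    exact ramp_nonneg
  · rw [ramp_of_ge (by linarith) h]
    exact max_le (by linarith) zero_le_one

lemma le_ramp_zero {δ t : ℝ} (hδ : 0 < δ) (hδ1 : δ ≤ 1) (h0 : 0 ≤ t) (h1 : t ≤ 1) :
    t ≤ ramp 0 δ t := by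
  rcases le_total t δ with h | h
  · rw [ramp_of_mem hδ h0 h, sub_zero, sub_zero, le_div_iff₀ hδ]
    nlinarith
  · rw [ramp_of_ge hδ h]
    exact h1

lemma min_le_sqrt_mul_sqrt {c t : ℝ} (hc : 0 ≤ c) (ht : 0 ≤ t) : min t c ≤ √c * √t := by
  rw [← Real.sqrt_mul hc, ← Real.sqrt_mul_self (le_min ht hc)]
  exact Real.sqrt_le_sqrt
    (mul_le_mul (min_le_right _ _) (min_le_left _ _) (le_min ht hc) hc)

lemma max_mul_sub_mul_of_mul_eq_zero {a b c d : ℝ} (ha : 0 ≤ a) (hb : 0 ≤ b) (hc : 0 ≤ c)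
    (hd : 0 ≤ d) (hac : a * c = 0) : max (a * b - c * d) 0 = a * b := by
  rcases mul_eq_zero.1 hac with h | h
  · simp [h, mul_nonneg hc hd]
  · simp [h, mul_nonneg ha hb]

section InB

variable [TopologicalSpace X] {f g h : C_c(X, ℝ)}

@[simp] lemma compCc_apply (φ : C(ℝ, ℝ)) (hφ : φ 0 = 0) (f : C_c(X, ℝ)) (x : X) :
    compCc φ hφ f x = φ (f x) := rfl

lemma posPart_apply (g : C_c(X, ℝ)) (x : X) : g⁺ x = (g x)⁺ := rfl

lemma negPart_apply (g : C_c(X, ℝ)) (x : X) : g⁻ x = (g x)⁻ := rfl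

lemma inB_compCc (φ : C(ℝ, ℝ)) (hφ : φ 0 = 0) (f : C_c(X, ℝ)) : InB f (compCc φ hφ f) :=
  ⟨φ, hφ, fun _ => rfl⟩

lemma inB_self (f : C_c(X, ℝ)) : InB f f := ⟨ContinuousMap.id ℝ, rfl, fun _ => rfl⟩

lemma InB.trans (hg : InB f g) (hh : InB g h) : InB f h := by
  obtain ⟨φ, hφ, hg⟩ := hg
  obtain ⟨ψ, hψ, hh⟩ := hh
  exact ⟨ψ.comp φ, by simp [hφ, hψ], fun x => by simp [hh, hg]⟩

lemma InB.sub (hg : InB f g) (hh : InB f h) : InB f (g - h) := by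
  obtain ⟨φ, hφ, hg⟩ := hg
  obtain ⟨ψ, hψ, hh⟩ := hh
  exact ⟨φ - ψ, by simp [hφ, hψ], fun x => by simp [hh, hg]⟩

lemma InB.mul (hg : InB f g) (hh : InB f h) : InB f (g * h) := by
  obtain ⟨φ, hφ, hg⟩ := hg
  obtain ⟨ψ, hψ, hh⟩ := hh
  exact ⟨φ * ψ, by simp [hφ, hψ], fun x => by simp [hh, hg]⟩

lemma InB.smul (c : ℝ) (hg : InB f g) : InB f (c • g) := by
  obtain ⟨φ, hφ, hg⟩ := hg
  exact ⟨c • φ, by simp [hφ], fun x => by simp [hg]⟩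

lemma InB.posPart (hg : InB f g) : InB f g⁺ :=
  hg.trans ⟨ContinuousMap.id ℝ ⊔ 0, by simp, fun _ => rfl⟩

lemma InB.negPart (hg : InB f g) : InB f g⁻ :=
  hg.trans ⟨-ContinuousMap.id ℝ ⊔ 0, by simp, fun _ => rfl⟩

lemma InB.tsupport_subset (hg : InB f g) : tsupport g ⊆ tsupport f := by
  obtain ⟨φ, hφ, hg⟩ := hg
  refine closure_mono fun x hx => ?_
  contrapose! hx
  simp [Function.notMem_support.1 hx, hg, hφ]

end InB

namespace IsQuasiIntegral

variable [TopologicalSpace X] {ρ : C_c(X, ℝ) → ℝ} (hρ : IsQuasiIntegral ρ)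
  {f g h : C_c(X, ℝ)}
include hρ

lemma map_nonneg (hg : 0 ≤ g) : 0 ≤ ρ g := hρ.pos g hg

lemma map_sub (hg : InB f g) (hh : InB f h) : ρ (g - h) = ρ g - ρ h := by
  have := hρ.add f (g - h) h (hg.sub hh) hh
  rw [sub_add_cancel] at this
  linarith

lemma map_mono (hg : InB f g) (hh : InB f h) (hgh : g ≤ h) : ρ g ≤ ρ h := by
  have := hρ.map_nonneg (sub_nonneg.2 hgh)
  rw [hρ.map_sub hh hg] at this
  linarith

lemma map_eq_posPart_sub_negPart (g : C_c(X, ℝ)) : ρ g = ρ g⁺ - ρ g⁻ := by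
  rw [← hρ.map_sub (inB_self g).posPart (inB_self g).negPart, posPart_sub_negPart]

lemma map_add_of_map_add_of_nonneg (hadd : ∀ g h, 0 ≤ g → 0 ≤ h → ρ (g + h) = ρ g + ρ h)
    (g h : C_c(X, ℝ)) : ρ (g + h) = ρ g + ρ h := by
  have hparts : (g + h)⁺ + (g⁻ + h⁻) = (g + h)⁻ + (g⁺ + h⁺) := by
    ext x
    simp only [CompactlySupportedContinuousMap.coe_add, Pi.add_apply, posPart_apply,
      negPart_apply]
    linarith [posPart_sub_negPart (g x + h x), posPart_sub_negPart (g x),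
      posPart_sub_negPart (h x)]
  have := congrArg ρ hparts
  rw [hadd _ _ (posPart_nonneg _) (add_nonneg (negPart_nonneg _) (negPart_nonneg _)),
    hadd _ _ (negPart_nonneg _) (add_nonneg (posPart_nonneg _) (posPart_nonneg _)),
    hadd _ _ (negPart_nonneg _) (negPart_nonneg _),
    hadd _ _ (posPart_nonneg _) (posPart_nonneg _)] at this
  rw [hρ.map_eq_posPart_sub_negPart (g + h), hρ.map_eq_posPart_sub_negPart g,
    hρ.map_eq_posPart_sub_negPart h]
  linarith

end IsQuasiIntegral

section Pure

variable [TopologicalSpace X] {ρ : C_c(X, ℝ) → ℝ} {f g h k w W : C_c(X, ℝ)}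

def Splits (ρ : C_c(X, ℝ) → ℝ) : Prop :=
  ∃ f g h : C_c(X, ℝ), InB f g ∧ InB f h ∧ 0 ≤ g ∧ 0 ≤ h ∧ g * h = 0 ∧ 0 < ρ g ∧ 0 < ρ h

def IsPure (ρ : C_c(X, ℝ) → ℝ) (w : C_c(X, ℝ)) : Prop :=
  ∀ g, InB w g → 0 ≤ g → (∀ x, w x = 1 → g x = 0) → ρ g = 0

lemma IsQuasiIntegral.map_eq_zero_of_not_splits (hρ : IsQuasiIntegral ρ) (hs : ¬Splits ρ)
    (hg : InB f g) (hh : InB f h) (hg0 : 0 ≤ g) (hh0 : 0 ≤ h) (hgh : g * h = 0)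
    (hpos : 0 < ρ g) : ρ h = 0 :=
  le_antisymm (not_lt.1 fun h' => hs ⟨f, g, h, hg, hh, hg0, hh0, hgh, hpos, h'⟩)
    (hρ.map_nonneg hh0)

lemma IsPure.map_congr (hρ : IsQuasiIntegral ρ) (hw : IsPure ρ w) (hg : InB w g)
    (hh : InB w h) (hgh : ∀ x, w x = 1 → g x = h x) : ρ g = ρ h := by
  have hd : InB w (g - h) := hg.sub hh
  have hvan : ∀ x, w x = 1 → (g - h) x = 0 := fun x hx => by simp [hgh x hx]
  have hpos : ρ (g - h)⁺ = 0 :=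
    hw _ hd.posPart (posPart_nonneg _) fun x hx => by simp [posPart_def, hvan x hx]
  have hneg : ρ (g - h)⁻ = 0 :=
    hw _ hd.negPart (negPart_nonneg _) fun x hx => by simp [negPart_def, hgh x hx]
  have := hρ.map_eq_posPart_sub_negPart (g - h)
  rw [hpos, hneg, hρ.map_sub hg hh] at this
  linarith

/-- `min t (2δ) ≤ √(2δ) √t` bounds the part of `k` below level `2δ`. -/
lemma IsQuasiIntegral.map_le_sqrt_mul_add_ramp (hρ : IsQuasiIntegral ρ) (hk0 : 0 ≤ k)
    (hk1 : ∀ x, k x ≤ 1) {δ : ℝ} (hδ : 0 < δ) :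
    ρ k ≤ √(2 * δ) * ρ (compCc ⟨Real.sqrt, Real.continuous_sqrt⟩ Real.sqrt_zero k) +
      ρ (compCc (ramp δ (2 * δ)) (ramp_zero hδ.le (by linarith)) k) := by
  set low := compCc ⟨fun t => min t (2 * δ), by fun_prop⟩ (min_eq_left (by linarith)) k
  set high := compCc ⟨fun t => max (t - 2 * δ) 0, by fun_prop⟩ (by simp [hδ.le]) k
  have hsplit : ρ k = ρ low + ρ high := by
    have hk : k = low + high := by
      ext x
      simp only [low, high, CompactlySupportedContinuousMap.coe_add, Pi.add_apply,
        compCc_apply, ContinuousMap.coe_mk]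
      rcases le_total (k x) (2 * δ) with h | h
      · rw [min_eq_left h, max_eq_right (by linarith), add_zero]
      · rw [min_eq_right h, max_eq_left (by linarith)]
        ring
    conv_lhs => rw [hk]
    exact hρ.add k _ _ (inB_compCc _ _ _) (inB_compCc _ _ _)
  have hlow :
      ρ low ≤ ρ (√(2 * δ) • compCc ⟨Real.sqrt, Real.continuous_sqrt⟩ Real.sqrt_zero k) :=
    hρ.map_mono (inB_compCc _ _ _) ((inB_compCc _ _ _).smul _) fun x =>
      min_le_sqrt_mul_sqrt (by linarith) (hk0 x)
  have hhigh : ρ high ≤ ρ (compCc (ramp δ (2 * δ)) (ramp_zero hδ.le (by linarith)) k) :=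
    hρ.map_mono (inB_compCc _ _ _) (inB_compCc _ _ _) fun x => max_sub_le_ramp hδ (hk1 x)
  rw [hρ.smul] at hlow
  linarith

open Filter Topology in
lemma IsQuasiIntegral.exists_ramp_pos (hρ : IsQuasiIntegral ρ) (hk0 : 0 ≤ k)
    (hk1 : ∀ x, k x ≤ 1) (hk : 0 < ρ k) :
    ∃ δ, ∃ hδ : 0 < δ, δ ≤ 1 ∧
      0 < ρ (compCc (ramp δ (2 * δ)) (ramp_zero hδ.le (by linarith)) k) := by
  by_contra! hcon
  set C := ρ (compCc ⟨Real.sqrt, Real.continuous_sqrt⟩ Real.sqrt_zero k)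
  have hlim : Tendsto (fun δ : ℝ => √(2 * δ) * C) (𝓝[>] 0) (𝓝 0) := by
    have : Continuous fun δ : ℝ => √(2 * δ) * C := by fun_prop
    simpa using (this.tendsto 0).mono_left nhdsWithin_le_nhds
  have hbound : ∀ᶠ δ in 𝓝[>] (0 : ℝ), ρ k ≤ √(2 * δ) * C := by
    filter_upwards [Ioc_mem_nhdsGT zero_lt_one] with δ hδ
    linarith [hρ.map_le_sqrt_mul_add_ramp hk0 hk1 hδ.1, hcon δ hδ.1 hδ.2]
  linarith [ge_of_tendsto hlim hbound]

lemma IsQuasiIntegral.exists_isPure (hρ : IsQuasiIntegral ρ) (hs : ¬Splits ρ)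
    (hk01 : ∀ x, 0 ≤ k x ∧ k x ≤ 1) (hk : 0 < ρ k) :
    ∃ w, InB k w ∧ (∀ x, 0 ≤ w x ∧ w x ≤ 1) ∧ ρ k ≤ ρ w ∧ IsPure ρ w := by
  obtain ⟨δ, hδ, hδ1, hpos⟩ :=
    hρ.exists_ramp_pos (fun x => (hk01 x).1) (fun x => (hk01 x).2) hk
  have hkw : InB k (compCc (ramp 0 δ) (ramp_zero le_rfl hδ) k) := inB_compCc _ _ _
  refine ⟨_, hkw, fun x => ⟨ramp_nonneg, ramp_le_one⟩, ?_, ?_⟩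
  · exact hρ.map_mono (inB_self k) hkw fun x =>
      le_ramp_zero hδ hδ1 (hk01 x).1 (hk01 x).2
  · intro g hg hg0 hg1
    refine hρ.map_eq_zero_of_not_splits hs (inB_compCc _ _ _) (hkw.trans hg)
      (fun x => ramp_nonneg) hg0 ?_ hpos
    -- `ramp δ (2δ) ∘ k` has positive mass and lives on `{w = 1}`, where `g` vanishes
    ext x
    by_cases hx : ramp δ (2 * δ) (k x) = 0
    · simp [hx]
    · have hw1 : ramp 0 δ (k x) = 1 :=
        ramp_of_ge hδ (lt_of_ramp_ne_zero (by linarith) hx).le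
      simp [hg1 x hw1]

section Average

variable (hW : ∀ x, w x ≠ 0 → W x = 1)
include hW

lemma average_apply_cases (x : X) :
    (w x = 0 ∧ ((2⁻¹ : ℝ) • (W + w)) x = 2⁻¹ * W x) ∨
      (W x = 1 ∧ ((2⁻¹ : ℝ) • (W + w)) x = 2⁻¹ * (1 + w x)) := by
  simp only [CompactlySupportedContinuousMap.coe_smul, CompactlySupportedContinuousMap.coe_add,
    Pi.smul_apply, Pi.add_apply, smul_eq_mul]
  by_cases hx : w x = 0
  · exact Or.inl ⟨hx, by rw [hx, add_zero]⟩
  · exact Or.inr ⟨hW x hx, by rw [hW x hx]⟩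

lemma compCc_ramp_average (hW01 : ∀ x, 0 ≤ W x ∧ W x ≤ 1) :
    compCc (ramp (3 / 4) 1) (ramp_zero (by norm_num) (by norm_num)) ((2⁻¹ : ℝ) • (W + w)) =
      compCc (ramp 2⁻¹ 1) (ramp_zero (by norm_num) (by norm_num)) w := by
  ext x
  rw [compCc_apply, compCc_apply]
  rcases average_apply_cases hW x with ⟨hx, hux⟩ | ⟨-, hux⟩
  · rw [hx, hux, ramp_of_le (by norm_num) (by linarith [(hW01 x).2]),
      ramp_of_le (by norm_num) (by norm_num)]
  · rw [hux, ramp_apply, ramp_apply]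
    congr 2
    ring

/-- Split `g ∈ B(u)`, `u = (W + w) / 2`, at the levels `1/2 … 3/4` of `u`. The upper part is a
function of `w`, as `u ≤ 1/2` off the support of `w`. The lower part lives below level `3/4`,
where `u` carries no mass because `ramp (3/4) 1 ∘ u = ramp (1/2) 1 ∘ w` has mass `ρ w > 0`. -/
lemma IsPure.average (hW01 : ∀ x, 0 ≤ W x ∧ W x ≤ 1) (hρ : IsQuasiIntegral ρ) (hs : ¬Splits ρ)
    (hw : IsPure ρ w) (hwpos : 0 < ρ w) : IsPure ρ ((2⁻¹ : ℝ) • (W + w)) := by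
  have hcases := average_apply_cases hW
  set u := (2⁻¹ : ℝ) • (W + w)
  intro g hg hg0 hg1
  set b := ramp 2⁻¹ (3 / 4)
  have hb0 : b 0 = 0 := ramp_zero (by norm_num) (by norm_num)
  set high := g * compCc b hb0 u
  have hhigh : InB u high := hg.mul (inB_compCc _ _ _)
  have hlow : InB u (g - high) := hg.sub hhigh
  have hhigh0 : 0 ≤ high := fun x => mul_nonneg (hg0 x) ramp_nonneg
  have hlow0 : 0 ≤ g - high := fun x => by
    simpa [high, mul_sub] using mul_le_mul_of_nonneg_left (ramp_le_one (t := u x)) (hg0 x)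
  have hρhigh : ρ high = 0 := by
    obtain ⟨φ, hφ0, hgφ⟩ := hg
    let θ : C(ℝ, ℝ) := (φ * b).comp ⟨fun s => 2⁻¹ * (1 + s), by fun_prop⟩
    have hθ0 : θ 0 = 0 := by
      simp [θ, b, ramp_of_le (by norm_num : (2⁻¹ : ℝ) < 3 / 4) le_rfl]
    refine hw high ⟨θ, hθ0, fun x => ?_⟩ hhigh0 fun x hx => ?_
    · rcases hcases x with ⟨hx, hux⟩ | ⟨-, hux⟩
      · have hbx : b (u x) = 0 :=
          ramp_of_le (by norm_num) (by rw [hux]; linarith [(hW01 x).2])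
        simp [high, hbx, hx, hθ0]
      · simp [high, θ, hgφ, hux]
    · rcases hcases x with ⟨hx', -⟩ | ⟨-, hux⟩
      · norm_num [hx'] at hx
      · simp [high, hg1 x (by rw [hux, hx]; norm_num)]
  have hρlow : ρ (g - high) = 0 := by
    refine hρ.map_eq_zero_of_not_splits hs (inB_compCc (ramp (3 / 4) 1) (ramp_zero
      (by norm_num) (by norm_num)) u) hlow (fun _ => ramp_nonneg) hlow0 ?_ ?_
    · ext x
      by_cases hx : ramp (3 / 4) 1 (u x) = 0
      · simp [hx]
      · have hbx : b (u x) = 1 :=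
          ramp_of_ge (by norm_num) (lt_of_ramp_ne_zero (by norm_num) hx).le
        simp [high, hbx]
    · rwa [compCc_ramp_average hW hW01, hw.map_congr hρ (inB_compCc _ _ _) (inB_self w)
        fun x hx => by rw [compCc_apply, hx, ramp_of_ge (by norm_num) le_rfl]]
  rw [← add_sub_cancel high g, hρ.add u _ _ hhigh hlow, hρhigh, hρlow, add_zero]

lemma IsPure.map_eq_of_eq_one (hW01 : ∀ x, 0 ≤ W x ∧ W x ≤ 1) (hρ : IsQuasiIntegral ρ)
    (hs : ¬Splits ρ) (hw : IsPure ρ w) (hw01 : ∀ x, 0 ≤ w x ∧ w x ≤ 1) (hwpos : 0 < ρ w) :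
    ρ W = ρ w := by
  have hu := hw.average hW hW01 hρ hs hwpos
  have hcases := average_apply_cases hW
  set u := (2⁻¹ : ℝ) • (W + w)
  have hWu : W = compCc (ramp 0 2⁻¹) (ramp_zero le_rfl (by norm_num)) u := by
    ext x
    rw [compCc_apply]
    rcases hcases x with ⟨-, hux⟩ | ⟨hWx, hux⟩
    · rw [hux, ramp_of_mem (by norm_num) (by linarith [(hW01 x).1])
        (by linarith [(hW01 x).2])]
      ring
    · rw [hWx, ramp_of_ge (by norm_num) (by rw [hux]; linarith [(hw01 x).1])]
  have hwu : w = compCc (ramp 2⁻¹ 1) (ramp_zero (by norm_num) (by norm_num)) u := by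
    ext x
    rw [compCc_apply]
    rcases hcases x with ⟨hx, hux⟩ | ⟨-, hux⟩
    · rw [hx, ramp_of_le (by norm_num) (by rw [hux]; linarith [(hW01 x).2])]
    · rw [hux, ramp_of_mem (by norm_num) (by linarith [(hw01 x).1])
        (by linarith [(hw01 x).2])]
      ring
  rw [hWu, hwu]
  refine hu.map_congr hρ (inB_compCc _ _ _) (inB_compCc _ _ _) fun x hx => ?_
  rw [compCc_apply, compCc_apply, hx, ramp_of_ge (by norm_num) (by norm_num),
    ramp_of_ge (by norm_num) le_rfl]

end Average

lemma qiOpen_mono {U V : Set X} (h : U ⊆ V) : qiOpen ρ U ≤ qiOpen ρ V :=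
  iSup_mono fun _ => iSup_mono' fun hf => ⟨⟨hf.1, hf.2.trans h⟩, le_rfl⟩

lemma exists_pos_of_qiOpen_ne_zero {U : Set X} (hU : qiOpen ρ U ≠ 0) :
    ∃ f : C_c(X, ℝ), ((∀ x, 0 ≤ f x ∧ f x ≤ 1) ∧ tsupport f ⊆ U) ∧ 0 < ρ f := by
  by_contra! h
  exact hU (le_antisymm (iSup₂_le fun f hf => by simp [h f hf]) bot_le)

section LocallyCompact

variable [RegularSpace X] [LocallyCompactSpace X]

lemma IsPure.map_eq (hρ : IsQuasiIntegral ρ) (hs : ¬Splits ρ) {w' : C_c(X, ℝ)}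
    (hw : IsPure ρ w) (hw' : IsPure ρ w')
    (hw01 : ∀ x, 0 ≤ w x ∧ w x ≤ 1) (hw'01 : ∀ x, 0 ≤ w' x ∧ w' x ≤ 1)
    (hwpos : 0 < ρ w) (hw'pos : 0 < ρ w') : ρ w = ρ w' := by
  obtain ⟨W₀, hW1, -, hWc, hW01⟩ := exists_continuous_one_zero_of_isCompact
    (w.hasCompactSupport.union w'.hasCompactSupport) isClosed_empty (Set.disjoint_empty _)
  let W : C_c(X, ℝ) := ⟨W₀, hWc⟩
  have hW01' : ∀ x, 0 ≤ W x ∧ W x ≤ 1 := hW01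
  have hW (v : C_c(X, ℝ)) (hv : tsupport v ⊆ tsupport w ∪ tsupport w') (x : X)
      (hx : v x ≠ 0) : W x = 1 :=
    hW1 (hv (subset_tsupport _ hx))
  rw [← hw.map_eq_of_eq_one (hW w Set.subset_union_left) hW01' hρ hs hw01 hwpos,
    ← hw'.map_eq_of_eq_one (hW w' Set.subset_union_right) hW01' hρ hs hw'01 hw'pos]

lemma IsQuasiIntegral.qiOpen_le_of_not_splits (hρ : IsQuasiIntegral ρ) (hs : ¬Splits ρ)
    {U : Set X} (hU : qiOpen ρ U ≠ 0) (V : Set X) : qiOpen ρ V ≤ qiOpen ρ U := by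
  obtain ⟨k₀, ⟨hk₀01, hk₀U⟩, hk₀⟩ := exists_pos_of_qiOpen_ne_zero hU
  obtain ⟨w₀, hkw₀, hw₀01, hk₀w₀, hw₀⟩ := hρ.exists_isPure hs hk₀01 hk₀
  refine iSup₂_le fun k ⟨hk01, _⟩ => ?_
  rcases le_or_gt (ρ k) 0 with hk | hk
  · simp [ENNReal.ofReal_eq_zero.2 hk]
  obtain ⟨w, -, hw01, hkw, hw⟩ := hρ.exists_isPure hs hk01 hk
  calc ENNReal.ofReal (ρ k)
      ≤ ENNReal.ofReal (ρ w₀) := ENNReal.ofReal_le_ofReal <| hkw.trans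
        (hw.map_eq hρ hs hw₀ hw01 hw₀01 (hk.trans_le hkw) (hk₀.trans_le hk₀w₀)).le
    _ ≤ qiOpen ρ U := le_iSup₂_of_le w₀ ⟨hw₀01, hkw₀.tsupport_subset.trans hk₀U⟩ le_rfl

lemma IsQuasiIntegral.qiMeas_eq_zero_or_eq_of_not_splits (hρ : IsQuasiIntegral ρ)
    (hs : ¬Splits ρ) (A : Set X) : qiMeas ρ A = 0 ∨ qiMeas ρ A = qiOpen ρ Set.univ := by
  have hopen (U : Set X) : qiOpen ρ U = 0 ∨ qiOpen ρ U = qiOpen ρ Set.univ :=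
    or_iff_not_imp_left.2 fun hU =>
      le_antisymm (qiOpen_mono (Set.subset_univ U)) (hρ.qiOpen_le_of_not_splits hs hU _)
  unfold qiMeas
  split_ifs with hA
  · exact hopen A
  by_cases hz : ∃ U, (IsOpen U ∧ A ⊆ U) ∧ qiOpen ρ U = 0
  · obtain ⟨U, hU, hU0⟩ := hz
    exact Or.inl (le_antisymm (iInf₂_le_of_le U hU hU0.le) bot_le)
  · push Not at hz
    exact Or.inr (le_antisymm (iInf₂_le _ ⟨isOpen_univ, Set.subset_univ A⟩)
      (le_iInf₂ fun U hU => ((hopen U).resolve_left (hz U hU)).ge))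

end LocallyCompact

end Pure

section Products

variable [TopologicalSpace X] [TopologicalSpace Y] [T2Space X]

lemma fiberY_tensor (w : C_c(X, ℝ)) (g : C_c(Y, ℝ)) (y : Y) :
    fiberY (tensor w g) y = g y • w := by
  ext x
  exact mul_comm _ _

lemma fiberY_add (P Q : C_c(X × Y, ℝ)) (y : Y) :
    fiberY (P + Q) y = fiberY P y + fiberY Q y := rfl

lemma prodQI_eq_of_fiberY (η : C_c(Y, ℝ) → ℝ) (ρ : C_c(X, ℝ) → ℝ) {P : C_c(X × Y, ℝ)}
    {v : C_c(Y, ℝ)} (hv : ∀ y, ρ (fiberY P y) = v y) : prodQI η ρ P = η v := by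
  have hT : Tmap ρ P = v := funext hv
  have hcond : Continuous (Tmap ρ P) ∧ HasCompactSupport (Tmap ρ P) :=
    hT ▸ ⟨v.continuous, v.hasCompactSupport⟩
  simp only [prodQI, TCc, dif_pos hcond]
  congr

variable {ρ : C_c(X, ℝ) → ℝ} {η : C_c(Y, ℝ) → ℝ}

lemma IsQuasiIntegral.map_smul_add_smul (hρ : IsQuasiIntegral ρ)
    (hη : IsQuasiIntegral η) (hqi : IsQuasiIntegral (prodQI η ρ)) {f w₁ w₂ : C_c(X, ℝ)}
    (hw₁ : InB f w₁) (hw₂ : InB f w₂) (h0₁ : 0 ≤ w₁) (h0₂ : 0 ≤ w₂) (hdisj : w₁ * w₂ = 0)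
    {g h : C_c(Y, ℝ)} (hg : 0 ≤ g) (hh : 0 ≤ h) :
    η (ρ w₁ • g + ρ w₂ • h) = ρ w₁ * η g + ρ w₂ * η h := by
  have hdisj' (x : X) : w₁ x * w₂ x = 0 := DFunLike.congr_fun hdisj x
  set F := tensor w₁ g - tensor w₂ h
  have hpos : F⁺ = tensor w₁ g := by
    ext p
    exact max_mul_sub_mul_of_mul_eq_zero (h0₁ _) (hg _) (h0₂ _) (hh _) (hdisj' _)
  have hneg : F⁻ = tensor w₂ h := by
    ext p
    simpa [F, negPart_apply, negPart_def, tensor] using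
      max_mul_sub_mul_of_mul_eq_zero (h0₂ p.1) (hh p.2)
      (h0₁ p.1) (hg p.2) (by rw [mul_comm, hdisj'])
  have hprod (w : C_c(X, ℝ)) (k : C_c(Y, ℝ)) : prodQI η ρ (tensor w k) = η (ρ w • k) :=
    prodQI_eq_of_fiberY η ρ fun y => by simp [fiberY_tensor, hρ.smul, mul_comm]
  have hsum : prodQI η ρ (tensor w₁ g + tensor w₂ h) = η (ρ w₁ • g + ρ w₂ • h) :=
    prodQI_eq_of_fiberY η ρ fun y => by
      rw [fiberY_add, fiberY_tensor, fiberY_tensor, hρ.add f _ _ (hw₁.smul _) (hw₂.smul _),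
        hρ.smul, hρ.smul]
      simp [mul_comm]
  have := hqi.add F _ _ (inB_self F).posPart (inB_self F).negPart
  rw [hpos, hneg, hsum, hprod, hprod] at this
  rw [this, hη.smul, hη.smul]

lemma IsQuasiIntegral.map_add_of_splits (hρ : IsQuasiIntegral ρ) (hη : IsQuasiIntegral η)
    (hqi : IsQuasiIntegral (prodQI η ρ)) (hs : Splits ρ) (g h : C_c(Y, ℝ)) :
    η (g + h) = η g + η h := by
  obtain ⟨f, w₁, w₂, hw₁, hw₂, h0₁, h0₂, hdisj, ha, hb⟩ := hs
  refine hη.map_add_of_map_add_of_nonneg (fun g h hg hh => ?_) g h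
  have := hρ.map_smul_add_smul hη hqi hw₁ hw₂ h0₁ h0₂ hdisj (g := (ρ w₁)⁻¹ • g)
    (h := (ρ w₂)⁻¹ • h) (fun y => mul_nonneg (inv_nonneg.2 ha.le) (hg y))
    (fun y => mul_nonneg (inv_nonneg.2 hb.le) (hh y))
  rwa [smul_inv_smul₀ ha.ne', smul_inv_smul₀ hb.ne', hη.smul, hη.smul,
    mul_inv_cancel_left₀ ha.ne', mul_inv_cancel_left₀ hb.ne'] at this

end Products

end QLF

namespace QLF
theorem statement7_general {X Y : Type*}
    [TopologicalSpace X] [LocallyCompactSpace X] [T2Space X]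
    [TopologicalSpace Y]
    (ρ : C_c(X, ℝ) → ℝ) (η : C_c(Y, ℝ) → ℝ)
    (hρ : IsQuasiIntegral ρ) (hη : IsQuasiIntegral η)
    (hvals : ∃ A B C : Set X, (IsOpen A ∨ IsClosed A) ∧ (IsOpen B ∨ IsClosed B) ∧
      (IsOpen C ∨ IsClosed C) ∧ qiMeas ρ A ≠ qiMeas ρ B ∧
      qiMeas ρ B ≠ qiMeas ρ C ∧ qiMeas ρ A ≠ qiMeas ρ C)
    (hqi : IsQuasiIntegral (prodQI η ρ)) :
    ∀ g h : C_c(Y, ℝ), η (g + h) = η g + η h := by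
  by_cases hs : Splits ρ
  · exact hρ.map_add_of_splits hη hqi hs
  obtain ⟨A, B, C, -, -, -, hAB, hBC, hAC⟩ := hvals
  rcases hρ.qiMeas_eq_zero_or_eq_of_not_splits hs A with hA | hA <;>
  rcases hρ.qiMeas_eq_zero_or_eq_of_not_splits hs B with hB | hB <;>
  rcases hρ.qiMeas_eq_zero_or_eq_of_not_splits hs C with hC | hC <;>
  simp_all

theorem statement7 {X Y : Type*}
    [TopologicalSpace X] [LocallyCompactSpace X] [T2Space X] [ConnectedSpace X]
    [TopologicalSpace Y] [LocallyCompactSpace Y] [T2Space Y] [ConnectedSpace Y]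
    (ρ : C_c(X, ℝ) → ℝ) (η : C_c(Y, ℝ) → ℝ)
    (hρ : IsQuasiIntegral ρ) (hη : IsQuasiIntegral η)
    (hvals : ∃ A B C : Set X, (IsOpen A ∨ IsClosed A) ∧ (IsOpen B ∨ IsClosed B) ∧
      (IsOpen C ∨ IsClosed C) ∧ qiMeas ρ A ≠ qiMeas ρ B ∧
      qiMeas ρ B ≠ qiMeas ρ C ∧ qiMeas ρ A ≠ qiMeas ρ C)
    (hqi : IsQuasiIntegral (prodQI η ρ)) :
    ∀ g h : C_c(Y, ℝ), η (g + h) = η g + η h :=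
  statement7_general ρ η hρ hη hvals hqi
end QLF
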